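/- For every finite rooted tree T, the group Aut(T) is ambivalent: every g ∈ Aut(T) is conjugate in Aut(T) to its inverse g⁻¹. -/

import Mathlib

open Function

structure FRTree : Type 1 where
  V : Type
  [fintypeV : Fintype V]
  [decEqV : DecidableEq V]
  root : V
  parent : V → V
  parent_root : parent root = root
  reaches_root : ∀ v : V, ∃ n : ℕ, parent^[n] v = root

attribute [instance] FRTree.fintypeV FRTree.decEqV

namespace FRTree

/-- `w` is a child of `u`. -/
def IsChild (T : FRTree) (w u : T.V) : Prop := w ≠ T.root ∧ T.parent w = u

instance (T : FRTree) (w u : T.V) : Decidable (T.IsChild w u) :=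
  inferInstanceAs (Decidable (w ≠ T.root ∧ T.parent w = u))

/-- A vertex is internal if it has at least one child. -/
def Internal (T : FRTree) (u : T.V) : Prop := ∃ w, T.IsChild w u

/-- A leaf is a vertex without children. -/
def IsLeaf (T : FRTree) (u : T.V) : Prop := ¬ T.Internal u

/-- Two (non-root) vertices are siblings if they have the same parent. -/
def Siblings (T : FRTree) (u v : T.V) : Prop :=
  u ≠ T.root ∧ v ≠ T.root ∧ T.parent u = T.parent v

/-- The set of vertices of the subtree `T_u`:  `u` together with all of its descendants. -/
def Desc (T : FRTree) (u : T.V) : Set T.V := {v | ∃ n : ℕ, T.parent^[n] v = u}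

/-- First level vertices. -/
def FirstLevel (T : FRTree) (v : T.V) : Prop := v ≠ T.root ∧ T.parent v = T.root

/-- The children of a vertex, as a finset. -/
def children (T : FRTree) (u : T.V) : Finset T.V :=
  Finset.univ.filter (fun w => T.IsChild w u)

end FRTree

open FRTree

/-- Rooted tree homomorphism: sends root to root, non-root vertices to non-root
vertices and commutes with taking the parent.  (This is the same as a graph
homomorphism between the underlying trees sending root to root.) -/
def IsHom (T P : FRTree) (φ : T.V → P.V) : Prop :=
  φ T.root = P.root ∧
  ∀ v : T.V, v ≠ T.root → φ v ≠ P.root ∧ P.parent (φ v) = φ (T.parent v)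

/-- Isomorphism of rooted trees. -/
def IsIsom (T P : FRTree) (φ : T.V → P.V) : Prop :=
  IsHom T P φ ∧ Function.Bijective φ

/-- The automorphism group of a rooted tree, as a subgroup of the permutations of the vertices. -/
def FRTree.Aut (T : FRTree) : Subgroup (Equiv.Perm T.V) where
  carrier := {g : Equiv.Perm T.V | IsHom T T ⇑g}
  one_mem' := ⟨rfl, fun v hv => ⟨hv, rfl⟩⟩
  mul_mem' := by
    rintro a b ⟨ha0, ha⟩ ⟨hb0, hb⟩
    refine ⟨?_, fun v hv => ?_⟩
    · simp only [Equiv.Perm.coe_mul, Function.comp_apply, hb0, ha0]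
    · obtain ⟨hb1, hb2⟩ := hb v hv
      obtain ⟨ha1, ha2⟩ := ha (b v) hb1
      refine ⟨by simpa using ha1, ?_⟩
      simp only [Equiv.Perm.coe_mul, Function.comp_apply]
      rw [ha2, hb2]
  inv_mem' := by
    rintro a ⟨ha0, ha⟩
    refine ⟨a.injective (by simp [ha0]), fun v hv => ?_⟩
    have h1 : a⁻¹ v ≠ T.root := by
      intro h
      apply hv
      have h2 := congrArg a h
      rwa [Equiv.Perm.inv_def, Equiv.apply_symm_apply, ha0] at h2
    obtain ⟨_, h3⟩ := ha (a⁻¹ v) h1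
    rw [Equiv.Perm.inv_def, Equiv.apply_symm_apply] at h3
    exact ⟨h1, a.injective (by rw [Equiv.Perm.inv_def, Equiv.apply_symm_apply, ← h3])⟩

/-- `τ` restricts to an isomorphism from the subtree `T_u` onto the subtree `T'_{u'}`.
(The values of `τ` outside of `T_u` are irrelevant.) -/
def IsSubtreeIso (T T' : FRTree) (u : T.V) (u' : T'.V) (τ : T.V → T'.V) : Prop :=
  τ u = u' ∧ Set.BijOn τ (T.Desc u) (T'.Desc u') ∧
  ∀ w ∈ T.Desc u, w ≠ u → τ w ≠ u' ∧ T'.parent (τ w) = τ (T.parent w)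

/-- A tree composition (`P`-composition of `T`): a surjective rooted tree homomorphism
satisfying the regularity condition. -/
def IsComposition (T P : FRTree) (φ : T.V → P.V) : Prop :=
  IsHom T P φ ∧ Function.Surjective φ ∧
  ∀ u v : T.V, u ≠ v → T.Internal u → T.Internal v → T.Siblings u v → φ u = φ v →
    ∃ g ∈ T.Aut, g u = v ∧ ∀ w ∈ T.Desc u, φ (g w) = φ w
/-- Equivalence of the restrictions `φ_u : T_u → P_{φ u}` and `ψ_{u'} : T'_{u'} → P'_{ψ u'}`
of two tree compositions. -/
def RestrEquiv (T P T' P' : FRTree) (φ : T.V → P.V) (ψ : T'.V → P'.V)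
    (u : T.V) (u' : T'.V) : Prop :=
  ∃ (τ : T.V → T'.V) (ω : P.V → P'.V),
    IsSubtreeIso T T' u u' τ ∧ IsSubtreeIso P P' (φ u) (ψ u') ω ∧
    ∀ w ∈ T.Desc u, ω (φ w) = ψ (τ w)

/-- Strict equivalence of the restrictions `δ_u : T_u → Q_{δ u}` and
`δ'_{u'} : T'_{u'} → Q_{δ' u'}` of two maps into the same tree `Q`
(the isomorphism on the target side is the identity). -/
def RestrStrictEquiv (T Q T' : FRTree) (δ : T.V → Q.V) (δ' : T'.V → Q.V)
    (u : T.V) (u' : T'.V) : Prop :=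
  δ u = δ' u' ∧ ∃ τ : T.V → T'.V, IsSubtreeIso T T' u u' τ ∧
    ∀ w ∈ T.Desc u, δ' (τ w) = δ w

/-- Equivalence of tree compositions. -/
def CompEquiv (T P T' P' : FRTree) (φ : T.V → P.V) (ψ : T'.V → P'.V) : Prop :=
  ∃ (τ : T.V → T'.V) (ω : P.V → P'.V),
    IsIsom T T' τ ∧ IsIsom P P' ω ∧ ω ∘ φ = ψ ∘ τ

/-- Strict equivalence of tree compositions with the same target tree. -/
def StrictEquiv (T T' P : FRTree) (φ : T.V → P.V) (ψ : T'.V → P.V) : Prop :=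
  ∃ τ : T.V → T'.V, IsIsom T T' τ ∧ ψ ∘ τ = φ

/-- `α : P → Q` is the quotient of the tree composition `φ : T → P`. -/
def IsQuotient (T P Q : FRTree) (φ : T.V → P.V) (α : P.V → Q.V) : Prop :=
  IsComposition P Q α ∧
  -- (a) for every internal `x ∈ P`, all children of `x` which are leaves are sent by `α`
  -- to a single vertex, which is the unique child of `α x` that is a leaf
  (∀ x : P.V, P.Internal x → ∀ y y' : P.V, P.IsChild y x → P.IsLeaf y →
    P.IsChild y' x → P.IsLeaf y' → α y = α y') ∧
  (∀ x y : P.V, P.Internal x → P.IsChild y x → P.IsLeaf y →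
    Q.IsChild (α y) (α x) ∧ Q.IsLeaf (α y) ∧
      ∀ z : Q.V, Q.IsChild z (α x) → Q.IsLeaf z → z = α y) ∧
  -- (b) distinct internal siblings of `Q` separate inequivalent restrictions of `φ`
  (∀ a b : Q.V, a ≠ b → Q.Internal a → Q.Internal b → Q.Siblings a b →
    ∀ u v : T.V, α (φ u) = a → α (φ v) = b → ¬ RestrEquiv T P T P φ φ u v) ∧
  -- (c) vertices with the same image under `α ∘ φ` have equivalent restrictions of `φ`,
  -- and strictly equivalent restrictions of `α ∘ φ`
  (∀ u w : T.V, T.Internal u → T.Internal w → α (φ u) = α (φ w) →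
    RestrEquiv T P T P φ φ u w ∧ RestrStrictEquiv T Q T (α ∘ φ) (α ∘ φ) u w)

/-- The type `|φ⁻¹|` of a tree composition: `|φ⁻¹|(root) = 0` and, for `y` non-root with
parent `x`, `|φ⁻¹|(y) = |φ⁻¹(y) ∩ Ch(u)|` where `u` is any vertex with `φ u = x` (for a tree
composition this number does not depend on the choice of `u`, so it equals the `sSup` below). -/
noncomputable def typeOf (T P : FRTree) (φ : T.V → P.V) (y : P.V) : ℕ :=
  if y = P.root then 0
  else sSup {n : ℕ | ∃ u : T.V, φ u = P.parent y ∧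
    n = (Finset.univ.filter (fun w => T.IsChild w u ∧ φ w = y)).card}

/-- The partition `λ^b` associated to a non-root vertex `b` of the quotient tree:
the multiset of the numbers `|φ⁻¹|(y)`, for `y` ranging over the children of `x`
with `α y = b` (where `x` is any vertex of `P` with `α x = ` parent of `b`). -/
noncomputable def assocPartition (T P Q : FRTree) (φ : T.V → P.V) (α : P.V → Q.V)
    (x : P.V) (b : Q.V) : Multiset ℕ :=
  ((Finset.univ.filter (fun y => P.IsChild y x ∧ α y = b)).val).map (typeOf T P φ)

/-- `Λ` is the partitional labeling of the quotient tree `Q` associated to the tree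
composition `φ : T → P` (with quotient map `α : P → Q`). -/
def IsAssocLabeling (T P Q : FRTree) (φ : T.V → P.V) (α : P.V → Q.V)
    (Λ : Q.V → Multiset ℕ) : Prop :=
  IsQuotient T P Q φ α ∧
  ∀ b : Q.V, b ≠ Q.root → ∀ x : P.V, α x = Q.parent b →
    Λ b = assocPartition T P Q φ α x b

/-- A partitional labeling: every non-root vertex is labeled by an integer partition
(a multiset of positive integers). -/
def IsPartitionalLabeling (Q : FRTree) (Λ : Q.V → Multiset ℕ) : Prop :=
  ∀ a : Q.V, a ≠ Q.root → ∀ n ∈ Λ a, 0 < n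

/-- Isomorphism of the restrictions of two partitional labelings to the subtrees `Q_a` and
`Q'_b`, the roots `a`, `b` being regarded as unlabeled. -/
def LabelRestrIso (Q Q' : FRTree) (Λ : Q.V → Multiset ℕ) (Ξ : Q'.V → Multiset ℕ)
    (a : Q.V) (b : Q'.V) : Prop :=
  ∃ γ : Q.V → Q'.V, IsSubtreeIso Q Q' a b γ ∧
    ∀ c ∈ Q.Desc a, c ≠ a → Λ c = Ξ (γ c)

/-- A tree of partitions. -/
def IsTreeOfPartitions (Q : FRTree) (Λ : Q.V → Multiset ℕ) : Prop :=
  IsPartitionalLabeling Q Λ ∧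
  (∀ x y y' : Q.V, Q.IsChild y x → Q.IsLeaf y → Q.IsChild y' x → Q.IsLeaf y' → y = y') ∧
  (∀ a b : Q.V, a ≠ b → Q.Internal a → Q.Internal b → Q.Siblings a b →
    ¬ LabelRestrIso Q Q Λ Λ a b)

/-- Isomorphism of partitional labelings. -/
def LabelIso (Q Q' : FRTree) (Λ : Q.V → Multiset ℕ) (Ξ : Q'.V → Multiset ℕ) : Prop :=
  ∃ γ : Q.V → Q'.V, IsIsom Q Q' γ ∧ ∀ a : Q.V, a ≠ Q.root → Λ a = Ξ (γ a)

/-- `δ : T → Q` is a realization of the tree of partitions `(Λ, Q)` as a tree of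
partitions of `T`. -/
def IsRealization (T Q : FRTree) (Λ : Q.V → Multiset ℕ) (δ : T.V → Q.V) : Prop :=
  IsComposition T Q δ ∧
  ∀ a : Q.V, Q.Internal a → ∀ u : T.V, δ u = a →
    ∑ b ∈ Q.children a, (Λ b).sum = (T.children u).card

/-- `(Λ, Q)` belongs to `Par(T)`. -/
def InParT (T Q : FRTree) (Λ : Q.V → Multiset ℕ) : Prop :=
  IsTreeOfPartitions Q Λ ∧ ∃ δ : T.V → Q.V, IsRealization T Q Λ δ

/-- The compatibility condition on `α : P → Q` entering the definition of `Par(T, P)`: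
at every vertex of `α⁻¹(a)` the numbers of children is the sum of the lengths of the
partitions labeling the children of `a`. -/
def LengthCond (P Q : FRTree) (Λ : Q.V → Multiset ℕ) (α : P.V → Q.V) : Prop :=
  ∀ a : Q.V, Q.Internal a → ∀ x : P.V, α x = a →
    ∑ b ∈ Q.children a, Multiset.card (Λ b) = (P.children x).card

/-- `(Λ, Q)` belongs to `Par(T, P)`. -/
def InParTP (T P Q : FRTree) (Λ : Q.V → Multiset ℕ) : Prop :=
  InParT T Q Λ ∧ ∃ α : P.V → Q.V, IsComposition P Q α ∧ LengthCond P Q Λ α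
/-- A common refinement of the tree compositions `φ : T → P` and `ψ : T → M`. -/
def IsCommonRefinement (T P M R : FRTree) (φ : T.V → P.V) (ψ : T.V → M.V)
    (ρ : T.V → R.V) (ϑ : R.V → P.V) (τ : R.V → M.V) : Prop :=
  IsComposition T R ρ ∧ IsComposition R P ϑ ∧ IsComposition R M τ ∧
  ϑ ∘ ρ = φ ∧ τ ∘ ρ = ψ

/-- Equivalence of the restricted common refinements `ρ_u` (of `(φ_u, ψ_u)`) and
`ρ_v` (of `(φ_v, ψ_v)`), where `ρ u = a`, `ρ v = b`, `ϑ a = ϑ b` and `τ a = τ b`. -/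
def RestrRefEquiv (T P M R : FRTree) (φ : T.V → P.V) (ψ : T.V → M.V)
    (ρ : T.V → R.V) (ϑ : R.V → P.V) (τ : R.V → M.V)
    (u v : T.V) (a b : R.V) : Prop :=
  ∃ (ζ : T.V → T.V) (γ : R.V → R.V),
    IsSubtreeIso T T u v ζ ∧ IsSubtreeIso R R a b γ ∧
    (∀ w ∈ T.Desc u, φ (ζ w) = φ w) ∧
    (∀ w ∈ T.Desc u, ψ (ζ w) = ψ w) ∧
    (∀ w ∈ T.Desc u, ρ (ζ w) = γ (ρ w)) ∧
    (∀ r ∈ R.Desc a, ϑ (γ r) = ϑ r) ∧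
    (∀ r ∈ R.Desc a, τ (γ r) = τ r)

/-- The coarseness condition for a common refinement. -/
def Coarseness (T P M R : FRTree) (φ : T.V → P.V) (ψ : T.V → M.V)
    (ρ : T.V → R.V) (ϑ : R.V → P.V) (τ : R.V → M.V) : Prop :=
  (∀ a b : R.V, a ≠ b → R.Internal a → R.Internal b → R.Siblings a b →
    ϑ a = ϑ b → τ a = τ b →
    ∀ u v : T.V, ρ u = a → ρ v = b →
      ¬ RestrRefEquiv T P M R φ ψ ρ ϑ τ u v a b) ∧
  (∀ a b : R.V, a ≠ b → R.IsLeaf a → R.IsLeaf b → R.Siblings a b →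
    ¬ (ϑ a = ϑ b ∧ τ a = τ b))

/-- Equivalence of two common refinements of the same couple `(φ, ψ)` of tree
compositions of `T`. -/
def RefEquiv (T P M R R' : FRTree) (φ : T.V → P.V) (ψ : T.V → M.V)
    (ρ : T.V → R.V) (ϑ : R.V → P.V) (τ : R.V → M.V)
    (ρ' : T.V → R'.V) (ϑ' : R'.V → P.V) (τ' : R'.V → M.V) : Prop :=
  ∃ (ζ : T.V → T.V) (γ : R.V → R'.V),
    IsIsom T T ζ ∧ IsIsom R R' γ ∧
    φ ∘ ζ = φ ∧ ψ ∘ ζ = ψ ∧ ρ' ∘ ζ = γ ∘ ρ ∧ ϑ' ∘ γ = ϑ ∧ τ' ∘ γ = τ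

/-- The orbit of the tree composition `φ` under the action `g • φ = φ ∘ g⁻¹` of `Aut T`. -/
def OrbitSet (T P : FRTree) (φ : T.V → P.V) : Type :=
  {ψ : T.V → P.V // ∃ g ∈ T.Aut, ψ = φ ∘ ⇑g⁻¹}

/-- The action of `Aut T` on the orbit of `φ`. -/
def orbAct (T P : FRTree) (φ : T.V → P.V) (g : T.Aut)
    (ψ : OrbitSet T P φ) : OrbitSet T P φ :=
  ⟨ψ.1 ∘ ⇑((g : Equiv.Perm T.V))⁻¹, by
    obtain ⟨h, hh, hψ⟩ := ψ.2
    refine ⟨(g : Equiv.Perm T.V) * h, mul_mem g.2 hh, ?_⟩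
    rw [hψ]
    funext x
    simp [Function.comp, mul_inv_rev]⟩

/-- The permutation representation `M^{|φ⁻¹|}` of `Aut T` on the (complex functions on
the) orbit of the tree composition `φ`. -/
noncomputable def permRep (T P : FRTree) (φ : T.V → P.V) :
    Representation ℂ (T.Aut) (OrbitSet T P φ → ℂ) where
  toFun g :=
    { toFun := fun F ψ => F (orbAct T P φ g⁻¹ ψ)
      map_add' := fun _ _ => rfl
      map_smul' := fun _ _ => rfl }
  map_one' := by
    refine LinearMap.ext fun F => funext fun ψ => ?_
    show F (orbAct T P φ 1⁻¹ ψ) = F ψ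
    have h : orbAct T P φ 1⁻¹ ψ = ψ := Subtype.ext (funext fun x => by simp [orbAct])
    rw [h]
  map_mul' := by
    intro a b
    refine LinearMap.ext fun F => funext fun ψ => ?_
    show F (orbAct T P φ (a * b)⁻¹ ψ) = F (orbAct T P φ b⁻¹ (orbAct T P φ a⁻¹ ψ))
    have h : orbAct T P φ (a * b)⁻¹ ψ = orbAct T P φ b⁻¹ (orbAct T P φ a⁻¹ ψ) :=
      Subtype.ext (funext fun x => by simp [orbAct, mul_inv_rev])
    rw [h]

/-- Equivalence of two representations. -/
def RepEquiv {G : Type*} [Group G] {V W : Type*}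
    [AddCommGroup V] [Module ℂ V] [AddCommGroup W] [Module ℂ W]
    (ρ : Representation ℂ G V) (σ : Representation ℂ G W) : Prop :=
  ∃ e : V ≃ₗ[ℂ] W, ∀ (g : G) (v : V), e (ρ g v) = σ g (e v)

/-- Irreducibility of a representation. -/
def IsIrreducibleRep {G V : Type*} [Group G] [AddCommGroup V] [Module ℂ V]
    (ρ : Representation ℂ G V) : Prop :=
  (∃ v : V, v ≠ 0) ∧
  ∀ U : Submodule ℂ V, (∀ g : G, ∀ v ∈ U, ρ g v ∈ U) → U = ⊥ ∨ U = ⊤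

/-- The space of equivariant linear maps between two representations; when `ρ` is
irreducible, its dimension is the multiplicity of `ρ` in `σ`. -/
def equivariantHoms {G : Type*} [Group G] {V W : Type*}
    [AddCommGroup V] [Module ℂ V] [AddCommGroup W] [Module ℂ W]
    (ρ : Representation ℂ G V) (σ : Representation ℂ G W) :
    Submodule ℂ (V →ₗ[ℂ] W) where
  carrier := {f | ∀ (g : G) (v : V), f (ρ g v) = σ g (f v)}
  add_mem' := by
    intro a b ha hb g v
    simp [ha g v, hb g v]
  zero_mem' := by intro g v; simp
  smul_mem' := by
    intro c f hf g v
    simp [hf g v]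

/-- The stabilizer `K_φ` of a tree composition `φ` in `Aut T`. -/
def stab (T P : FRTree) (φ : T.V → P.V) : Subgroup (T.Aut) where
  carrier := {g | ∀ x : T.V, φ ((g : Equiv.Perm T.V) x) = φ x}
  one_mem' := fun _ => rfl
  mul_mem' := by
    intro a b ha hb x
    simp only [Subgroup.coe_mul, Equiv.Perm.mul_apply]
    rw [ha ((b : Equiv.Perm T.V) x), hb x]
  inv_mem' := by
    intro a ha x
    have := ha (((a : Equiv.Perm T.V))⁻¹ x)
    simp only [Equiv.Perm.inv_def, Equiv.apply_symm_apply] at this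
    simpa using this.symm

/-- The space of the representation of `G` induced by the character `χ` of the
subgroup `K`: complex functions on `G` which are `χ`-covariant for right translation
by `K`; `G` acts by left translation. -/
noncomputable def IndSpace (G : Type*) [Group G] (K : Subgroup G) (χ : K →* ℂ) :
    Submodule ℂ (G → ℂ) where
  carrier := {f | ∀ (g : G) (k : K), f (g * k) = χ k * f g}
  add_mem' := by
    intro a b ha hb g k
    simp only [Pi.add_apply, ha g k, hb g k]
    ring
  zero_mem' := by intro g k; simp
  smul_mem' := by
    intro c f hf g k
    simp only [Pi.smul_apply, smul_eq_mul, hf g k]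
    ring

/-- The representation of `G` induced by the character `χ` of the subgroup `K`. -/
noncomputable def indRep (G : Type*) [Group G] (K : Subgroup G) (χ : K →* ℂ) :
    Representation ℂ G (IndSpace G K χ) where
  toFun g :=
    { toFun := fun f => ⟨fun x => (f : G → ℂ) (g⁻¹ * x), by
        intro x k
        have h := f.2 (g⁻¹ * x) k
        simpa [mul_assoc] using h⟩
      map_add' := by intro a b; apply Subtype.ext; funext x; rfl
      map_smul' := by intro c a; apply Subtype.ext; funext x; rfl }
  map_one' := by
    refine LinearMap.ext fun f => Subtype.ext (funext fun x => ?_)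
    simp
  map_mul' := by
    intro a b
    refine LinearMap.ext fun f => Subtype.ext (funext fun x => ?_)
    simp [mul_assoc]

/-- A sibling swap: an automorphism of order two exchanging the subtrees rooted at two
distinct siblings `u`, `v` and fixing everything else.  The sign representation of
`Aut T` is the unique homomorphism `Aut T →* ℂ` taking the value `-1` at every
sibling swap. -/
def IsSiblingSwap (T : FRTree) (g : Equiv.Perm T.V) : Prop :=
  ∃ u v : T.V, u ≠ v ∧ T.Siblings u v ∧ g u = v ∧
    (∀ w : T.V, w ∉ T.Desc u → w ∉ T.Desc v → g w = w) ∧ g * g = 1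

/-- The conjugate (transpose) of an integer partition, encoded as a multiset. -/
def conjP (m : Multiset ℕ) : Multiset ℕ :=
  ((Multiset.range m.sum).map fun i => Multiset.card (m.filter fun p => i < p)).filter
    fun n => 0 < n

/-- Two tree compositions of the same tree have `0-1` intersection. -/
def ZeroOneIntersection (T P M : FRTree) (φ : T.V → P.V) (ψ : T.V → M.V) : Prop :=
  ∀ v : T.V, T.Internal v → ∀ x : P.V, ∀ y : M.V,
    P.IsChild x (φ v) → M.IsChild y (ψ v) →
    {w : T.V | φ w = x ∧ ψ w = y}.Subsingleton

/-- `φᵗ : T → Pᵗ` (with quotient `αᵗ`) is a transpose of the tree composition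
`φ : T → P` with quotient `α : P → Q` and associated tree of partitions `Λ`. -/
def IsTranspose (T P Q Pt : FRTree) (φ : T.V → P.V) (α : P.V → Q.V)
    (Λ : Q.V → Multiset ℕ) (φt : T.V → Pt.V) (αt : Pt.V → Q.V) : Prop :=
  IsComposition T Pt φt ∧
  IsAssocLabeling T Pt Q φt αt (fun a => conjP (Λ a)) ∧
  (αt ∘ φt = α ∘ φ) ∧
  ZeroOneIntersection T P Pt φ φt

set_option synthInstance.maxHeartbeats 400000 in
/-- The multiplicity of the irreducible representation `ρ` inside `σ`: the dimension of
the space of equivariant linear maps. -/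
noncomputable def repMultiplicity {G : Type*} [Group G] {V W : Type*}
    [AddCommGroup V] [Module ℂ V] [AddCommGroup W] [Module ℂ W]
    (ρ : Representation ℂ G V) (σ : Representation ℂ G W) : ℕ :=
  Module.finrank ℂ ↥(equivariantHoms ρ σ)
/-! The conjugator `t` is an involution mapping every cycle of `g` onto itself by a reflection
`g ^ i b ↦ g ^ (c - i) b`, where `b` is a chosen base point of the cycle; any such map satisfies
`t g = g⁻¹ t` and `t t = 1`.  Writing `t x = g ^ (e x) x`, the offset `c` of the cycle of `x` is
chosen to be `e (parent b)`; since the parent map is `g`-equivariant, `t` then commutes with it.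
So `e` is defined by recursion on the depth: `e x = e (parent b) - 2 i` for `x = g ^ i b`. -/

namespace Equiv.Perm

variable {α : Type*} (g : Perm α)

noncomputable def cycleBase (x : α) : α :=
  @Quotient.out _ (SameCycle.setoid g) (@Quotient.mk _ (SameCycle.setoid g) x)

theorem sameCycle_cycleBase (x : α) : g.SameCycle (g.cycleBase x) x :=
  @Quotient.mk_out _ (SameCycle.setoid g) x

theorem cycleBase_apply_self (x : α) : g.cycleBase (g x) = g.cycleBase x :=
  congrArg (@Quotient.out _ (SameCycle.setoid g))
    (@Quotient.sound _ (SameCycle.setoid g) _ _ (sameCycle_apply_left.mpr SameCycle.rfl))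

noncomputable def cycleIndex (x : α) : ℤ := (g.sameCycle_cycleBase x).choose

theorem zpow_cycleIndex_apply (x : α) : (g ^ g.cycleIndex x) (g.cycleBase x) = x :=
  (g.sameCycle_cycleBase x).choose_spec

theorem zpow_sub_two_mul_cycleIndex_apply_self (c : ℤ) (x : α) :
    (g ^ (c - 2 * g.cycleIndex (g x))) (g x) = g⁻¹ ((g ^ (c - 2 * g.cycleIndex x)) x) := by
  have hx := g.zpow_cycleIndex_apply x
  have hgx := g.zpow_cycleIndex_apply (g x)
  rw [cycleBase_apply_self] at hgx
  generalize g.cycleBase x = b at hx hgx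
  generalize g.cycleIndex x = i at *
  generalize g.cycleIndex (g x) = j at *
  have hshift (k : ℤ) : (g ^ (k + j)) b = (g ^ (k + (1 + i))) b := by
    simp only [zpow_add, zpow_one, mul_apply, hgx, hx]
  rw [← hgx, ← hx, ← zpow_neg_one]
  simp only [← mul_apply, ← zpow_add]
  rw [show c - 2 * j + j = (c - i - 1 - j) + (1 + i) by ring,
    show -1 + (c - 2 * i + i) = (c - i - 1 - j) + j by ring, hshift]

end Equiv.Perm

namespace FRTree

open Equiv Perm

variable {T : FRTree}

noncomputable def depth (T : FRTree) (x : T.V) : ℕ := Nat.find (T.reaches_root x)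

theorem apply_root_of_mem_aut {a : Perm T.V} (ha : a ∈ T.Aut) : a T.root = T.root := ha.1

theorem apply_eq_root_iff_of_mem_aut {a : Perm T.V} (ha : a ∈ T.Aut) {x : T.V} :
    a x = T.root ↔ x = T.root := by
  rw [← a.apply_eq_iff_eq (x := x) (y := T.root), apply_root_of_mem_aut ha]

theorem parent_apply_of_mem_aut {a : Perm T.V} (ha : a ∈ T.Aut) (x : T.V) :
    T.parent (a x) = a (T.parent x) := by
  by_cases hx : x = T.root
  · rw [hx, apply_root_of_mem_aut ha, T.parent_root, apply_root_of_mem_aut ha]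
  · exact (ha.2 x hx).2

theorem depth_apply_of_mem_aut {a : Perm T.V} (ha : a ∈ T.Aut) (x : T.V) :
    T.depth (a x) = T.depth x := by
  have hcomm : Function.Commute T.parent a := parent_apply_of_mem_aut ha
  exact Nat.find_congr' fun {n} => by
    rw [(hcomm.iterate_left n).eq, apply_eq_root_iff_of_mem_aut ha]

theorem depth_parent_lt {x : T.V} (hx : x ≠ T.root) : T.depth (T.parent x) < T.depth x := by
  have hspec : T.parent^[T.depth x] x = T.root := Nat.find_spec (T.reaches_root x)
  have hpos : 0 < T.depth x := Nat.pos_of_ne_zero fun h0 => hx (by rwa [h0] at hspec)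
  refine lt_of_le_of_lt (Nat.find_le (n := T.depth x - 1) ?_) (Nat.sub_one_lt_of_lt hpos)
  rwa [← Function.iterate_succ_apply, Nat.succ_eq_add_one, Nat.sub_add_cancel hpos]

theorem cycleBase_ne_root {a : Perm T.V} (ha : a ∈ T.Aut) {x : T.V} (hx : x ≠ T.root) :
    a.cycleBase x ≠ T.root := fun h => hx (by
  rw [← a.zpow_cycleIndex_apply x, h, apply_root_of_mem_aut (zpow_mem ha _)])

theorem depth_cycleBase {a : Perm T.V} (ha : a ∈ T.Aut) (x : T.V) :
    T.depth (a.cycleBase x) = T.depth x := by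
  conv_rhs => rw [← a.zpow_cycleIndex_apply x]
  exact (depth_apply_of_mem_aut (zpow_mem ha _) _).symm

noncomputable def reflectionExp (g : T.Aut) (x : T.V) : ℤ :=
  if hx : x = T.root then 0
  else reflectionExp g (T.parent ((g : Perm T.V).cycleBase x)) - 2 * (g : Perm T.V).cycleIndex x
termination_by T.depth x
decreasing_by
  exact (depth_parent_lt (cycleBase_ne_root g.2 hx)).trans_eq (depth_cycleBase g.2 x)

theorem reflectionExp_of_ne_root (g : T.Aut) {x : T.V} (hx : x ≠ T.root) :
    reflectionExp g x =
      reflectionExp g (T.parent ((g : Perm T.V).cycleBase x)) - 2 * (g : Perm T.V).cycleIndex x := by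
  rw [reflectionExp, dif_neg hx]

noncomputable def reflection (g : T.Aut) (x : T.V) : T.V :=
  ((g : Perm T.V) ^ reflectionExp g x) x

theorem reflection_root (g : T.Aut) : reflection g T.root = T.root := by
  rw [reflection, reflectionExp, dif_pos rfl, zpow_zero, one_apply]

theorem reflection_apply (g : T.Aut) (x : T.V) :
    reflection g ((g : Perm T.V) x) = (g : Perm T.V)⁻¹ (reflection g x) := by
  by_cases hx : x = T.root
  · rw [hx, apply_root_of_mem_aut g.2, reflection_root, apply_root_of_mem_aut (inv_mem g.2)]
  have hgx : (g : Perm T.V) x ≠ T.root := (apply_eq_root_iff_of_mem_aut g.2).not.mpr hx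
  rw [reflection, reflection, reflectionExp_of_ne_root g hx, reflectionExp_of_ne_root g hgx,
    cycleBase_apply_self, zpow_sub_two_mul_cycleIndex_apply_self]

theorem reflection_inv_apply (g : T.Aut) (x : T.V) :
    reflection g ((g : Perm T.V)⁻¹ x) = (g : Perm T.V) (reflection g x) := by
  rw [← Perm.inv_eq_iff_eq, ← reflection_apply]
  simp

theorem reflection_zpow_apply (g : T.Aut) (n : ℤ) (x : T.V) :
    reflection g (((g : Perm T.V) ^ n) x) = ((g : Perm T.V) ^ (-n)) (reflection g x) := by
  induction n using Int.induction_on with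
  | zero => simp
  | succ n ih =>
    rw [add_comm, zpow_add, zpow_one, mul_apply, reflection_apply, ih, ← mul_apply, ← zpow_neg_one,
      ← zpow_add, neg_add]
  | pred n ih =>
    rw [sub_eq_neg_add, zpow_add, zpow_neg_one, mul_apply, reflection_inv_apply, ih, ← mul_apply,
      ← zpow_one_add]
    ring_nf

theorem reflection_involutive (g : T.Aut) : Function.Involutive (reflection g) := fun x => by
  change reflection g (((g : Perm T.V) ^ reflectionExp g x) x) = x
  rw [reflection_zpow_apply, reflection, ← mul_apply, ← zpow_add, neg_add_cancel, zpow_zero,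
    one_apply]

theorem parent_reflection (g : T.Aut) (x : T.V) :
    T.parent (reflection g x) = reflection g (T.parent x) := by
  by_cases hx : x = T.root
  · rw [hx, reflection_root, T.parent_root, reflection_root]
  have hpx : T.parent x =
      ((g : Perm T.V) ^ (g : Perm T.V).cycleIndex x) (T.parent ((g : Perm T.V).cycleBase x)) := by
    rw [← parent_apply_of_mem_aut (zpow_mem g.2 _), Perm.zpow_cycleIndex_apply]
  rw [reflection, parent_apply_of_mem_aut (zpow_mem g.2 _), hpx, reflection_zpow_apply,
    reflection, reflectionExp_of_ne_root g hx, ← mul_apply, ← mul_apply, ← zpow_add, ← zpow_add]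
  congr 2
  ring

noncomputable def reflectionPerm (g : T.Aut) : Perm T.V :=
  (reflection_involutive g).toPerm

theorem reflectionPerm_mem_aut (g : T.Aut) : reflectionPerm g ∈ T.Aut :=
  ⟨reflection_root g, fun x hx =>
    ⟨(apply_eq_root_iff_of_mem_aut (zpow_mem g.2 _)).not.mpr hx, parent_reflection g x⟩⟩

theorem reflectionPerm_conj (g : T.Aut) :
    reflectionPerm g * g * (reflectionPerm g)⁻¹ = (g : Perm T.V)⁻¹ := by
  rw [mul_inv_eq_iff_eq_mul]
  ext x
  exact reflection_apply g x

end FRTree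

/-- **Corollary.**  The group `Aut T` is ambivalent: every automorphism of a finite
rooted tree is conjugate in `Aut T` to its inverse. -/
theorem aut_ambivalent (T : FRTree) (g : Equiv.Perm T.V) (hg : g ∈ T.Aut) :
    ∃ t ∈ T.Aut, t * g * t⁻¹ = g⁻¹ :=
  ⟨FRTree.reflectionPerm ⟨g, hg⟩, FRTree.reflectionPerm_mem_aut _, FRTree.reflectionPerm_conj _⟩
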